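/- Let X and x be such that rows of X and x are iid random vectors in ℝ^k with E[x xᵀ] = I_k, XᵀX almost surely invertible, and x having at least two entries (k ≥ 2). Let X' be obtained from X by deleting its last column and x' from x by deleting its last entry, with X'ᵀX' almost surely invertible. Then E[n·xᵀ(XᵀX)⁻¹x] ≥ E[n·x'ᵀ(X'ᵀX')⁻¹x'] + 1. -/

import Mathlib

/-!
Write `A = XᵀX` in block form, with leading block `S = X'ᵀX'`, last column `b` and corner `c`.
Block inversion gives, for every `v`,
`vᵀA⁻¹v = v'ᵀS⁻¹v' + (eᵀv)² / s` with `e = (-S⁻¹b, 1)` and Schur complement `s = c - bᵀS⁻¹b > 0`,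
so `κ_x - κ_{x'} = n (eᵀx)² / s`. Since `x` is isotropic and independent of `X`, averaging over `x`
first gives `E[(eᵀx)² | X] = |e|² ≥ 1`, hence `E[κ_x - κ_{x'}] ≥ n E[1/s]`. Finally
`s ≤ c = Σᵢ X_{i,last}²`, whose mean is `n`, and Jensen for `t ↦ 1/t` gives `E[1/s] ≥ 1/n`.
-/

open MeasureTheory ProbabilityTheory Matrix
open scoped ENNReal

noncomputable section

theorem Fin.snoc_dotProduct {R : Type*} [NonUnitalNonAssocSemiring R] {m : ℕ} (p : Fin m → R)
    (t : R) (v : Fin (m + 1) → R) :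
    Fin.snoc p t ⬝ᵥ v = p ⬝ᵥ Fin.init v + t * v (Fin.last m) := by
  simp [dotProduct, Fin.sum_univ_castSucc, Fin.init]

theorem Fin.snoc_zero_eq_single {α : Type*} [Zero α] {m : ℕ} (t : α) :
    (Fin.snoc 0 t : Fin (m + 1) → α) = Pi.single (Fin.last m) t := by
  ext i
  refine Fin.lastCases ?_ (fun j => ?_) i
  · simp
  · simp [Fin.castSucc_ne_last]

namespace Matrix

variable {K : Type*} [Field K] {m : ℕ} (A : Matrix (Fin (m + 1)) (Fin (m + 1)) K)

def initBlock : Matrix (Fin m) (Fin m) K := A.submatrix Fin.castSucc Fin.castSucc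

def initLastCol : Fin m → K := fun i => A i.castSucc (Fin.last m)

def lastSchurComplement : K :=
  A (Fin.last m) (Fin.last m) - A.initLastCol ⬝ᵥ (A.initBlock⁻¹ *ᵥ A.initLastCol)

def lastSchurVector : Fin (m + 1) → K := Fin.snoc (-(A.initBlock⁻¹ *ᵥ A.initLastCol)) 1

def lastSchurTerm (v : Fin (m + 1) → K) : K :=
  (A.lastSchurVector ⬝ᵥ v) ^ 2 / A.lastSchurComplement

variable {A}

theorem IsSymm.mulVec_snoc (hA : A.IsSymm) (p : Fin m → K) (t : K) :
    A *ᵥ Fin.snoc p t = Fin.snoc (A.initBlock *ᵥ p + t • A.initLastCol)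
      (A.initLastCol ⬝ᵥ p + t * A (Fin.last m) (Fin.last m)) := by
  ext i
  refine Fin.lastCases ?_ (fun j => ?_) i
  · simp [mulVec, dotProduct, Fin.sum_univ_castSucc, initLastCol, ← hA.apply (Fin.last m), mul_comm]
  · simp [mulVec, dotProduct, Fin.sum_univ_castSucc, initBlock, initLastCol, mul_comm]

theorem IsSymm.mulVec_lastSchurVector (hA : A.IsSymm) (hS : IsUnit A.initBlock.det) :
    A *ᵥ A.lastSchurVector = Pi.single (Fin.last m) A.lastSchurComplement := by
  rw [lastSchurVector, hA.mulVec_snoc, ← Fin.snoc_zero_eq_single, lastSchurComplement,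
    mulVec_neg, mulVec_mulVec, mul_nonsing_inv _ hS, one_mulVec, dotProduct_neg]
  simp only [neg_add_cancel, one_smul, one_mul]
  congr 1
  ring

theorem IsSymm.lastSchurComplement_ne_zero (hA : A.IsSymm) (hAdet : IsUnit A.det)
    (hS : IsUnit A.initBlock.det) : A.lastSchurComplement ≠ 0 := by
  intro h
  have := eq_zero_of_mulVec_eq_zero hAdet.ne_zero
    (by rw [hA.mulVec_lastSchurVector hS, h, Pi.single_zero])
  simpa [lastSchurVector] using congrFun this (Fin.last m)

/-- The solution of the leading block, padded by `0`, is corrected along `A.lastSchurVector`,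
which `A` maps to a multiple of the last basis vector. -/
theorem IsSymm.inv_mulVec_eq (hA : A.IsSymm) (hAdet : IsUnit A.det)
    (hS : IsUnit A.initBlock.det) (v : Fin (m + 1) → K) :
    A⁻¹ *ᵥ v = Fin.snoc (A.initBlock⁻¹ *ᵥ Fin.init v) 0
      + (A.lastSchurVector ⬝ᵥ v / A.lastSchurComplement) • A.lastSchurVector := by
  set θ := A.lastSchurVector ⬝ᵥ v / A.lastSchurComplement
  set u := Fin.snoc (A.initBlock⁻¹ *ᵥ Fin.init v) 0 + θ • A.lastSchurVector
  have hθ : θ * A.lastSchurComplement =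
      -(A.initBlock⁻¹ *ᵥ A.initLastCol) ⬝ᵥ Fin.init v + v (Fin.last m) := by
    rw [div_mul_cancel₀ _ (hA.lastSchurComplement_ne_zero hAdet hS), lastSchurVector,
      Fin.snoc_dotProduct, one_mul]
  have hSinv : A.initBlock⁻¹.IsSymm := IsSymm.inv (hA.submatrix _)
  have hb : A.initLastCol ⬝ᵥ (A.initBlock⁻¹ *ᵥ Fin.init v) =
      (A.initBlock⁻¹ *ᵥ A.initLastCol) ⬝ᵥ Fin.init v := by
    rw [dotProduct_mulVec, ← hSinv.eq, vecMul_transpose, hSinv.eq]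
  have hsol : A *ᵥ u = v := by
    rw [mulVec_add, mulVec_smul, hA.mulVec_lastSchurVector hS, hA.mulVec_snoc,
      mulVec_mulVec, mul_nonsing_inv _ hS, one_mulVec, ← Fin.snoc_zero_eq_single]
    ext i
    refine Fin.lastCases ?_ (fun j => ?_) i
    · simp only [Pi.add_apply, Pi.smul_apply, Fin.snoc_last, smul_eq_mul, hb, zero_mul, add_zero]
      rw [hθ, neg_dotProduct]
      ring
    · simp [Fin.init]
  rw [← hsol, mulVec_mulVec, nonsing_inv_mul _ hAdet, one_mulVec]

theorem IsSymm.dotProduct_inv_mulVec (hA : A.IsSymm) (hAdet : IsUnit A.det)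
    (hS : IsUnit A.initBlock.det) (v : Fin (m + 1) → K) :
    v ⬝ᵥ (A⁻¹ *ᵥ v) = Fin.init v ⬝ᵥ (A.initBlock⁻¹ *ᵥ Fin.init v)
      + A.lastSchurTerm v := by
  rw [lastSchurTerm, hA.inv_mulVec_eq hAdet hS, dotProduct_add, dotProduct_smul, dotProduct_comm v,
    Fin.snoc_dotProduct, dotProduct_comm v, smul_eq_mul, zero_mul, add_zero,
    dotProduct_comm (_ *ᵥ _)]
  ring

theorem PosSemidef.lastSchurComplement_pos {A : Matrix (Fin (m + 1)) (Fin (m + 1)) ℝ}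
    (hA : A.PosSemidef) (hAdet : IsUnit A.det) (hS : IsUnit A.initBlock.det) :
    0 < A.lastSchurComplement := by
  have hsymm : A.IsSymm := isHermitian_iff_isSymm.1 hA.1
  have hquad := hA.dotProduct_mulVec_nonneg A.lastSchurVector
  rw [hsymm.mulVec_lastSchurVector hS, star_trivial, dotProduct_single, lastSchurVector,
    Fin.snoc_last, one_mul] at hquad
  exact hquad.lt_of_ne' (hsymm.lastSchurComplement_ne_zero hAdet hS)

theorem PosSemidef.lastSchurComplement_le {A : Matrix (Fin (m + 1)) (Fin (m + 1)) ℝ}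
    (hA : A.PosSemidef) : A.lastSchurComplement ≤ A (Fin.last m) (Fin.last m) := by
  have := (hA.submatrix Fin.castSucc).inv.dotProduct_mulVec_nonneg A.initLastCol
  rw [star_trivial] at this
  exact sub_le_self _ this

theorem one_le_lastSchurVector_dotProduct (A : Matrix (Fin (m + 1)) (Fin (m + 1)) ℝ) :
    1 ≤ A.lastSchurVector ⬝ᵥ A.lastSchurVector := by
  rw [lastSchurVector, Fin.snoc_dotProduct, Fin.init_snoc, Fin.snoc_last, one_mul,
    le_add_iff_nonneg_left]
  exact Finset.sum_nonneg fun i _ => mul_self_nonneg _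

theorem initBlock_transpose_mul_self {n : ℕ} (Z : Matrix (Fin n) (Fin (m + 1)) K) :
    (Zᵀ * Z).initBlock = (Z.submatrix id Fin.castSucc)ᵀ * Z.submatrix id Fin.castSucc := by
  rw [initBlock, submatrix_mul _ _ _ id _ Function.bijective_id, transpose_submatrix]

theorem posSemidef_transpose_mul_self {n ι : Type*} [Fintype n] [Fintype ι]
    (Z : Matrix n ι ℝ) : (Zᵀ * Z).PosSemidef := by
  simpa [conjTranspose_eq_transpose_of_trivial] using posSemidef_conjTranspose_mul_self Z

theorem dotProduct_inv_transpose_mul_self {n : ℕ} {Z : Matrix (Fin n) (Fin (m + 1)) ℝ}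
    (hZ : IsUnit (Zᵀ * Z).det)
    (hZ' : IsUnit ((Z.submatrix id Fin.castSucc)ᵀ * Z.submatrix id Fin.castSucc).det)
    (v : Fin (m + 1) → ℝ) :
    v ⬝ᵥ ((Zᵀ * Z)⁻¹ *ᵥ v) = Fin.init v ⬝ᵥ
      (((Z.submatrix id Fin.castSucc)ᵀ * Z.submatrix id Fin.castSucc)⁻¹ *ᵥ Fin.init v)
      + (Zᵀ * Z).lastSchurTerm v := by
  rw [← initBlock_transpose_mul_self] at hZ' ⊢
  exact (isHermitian_iff_isSymm.1 (posSemidef_transpose_mul_self Z).1).dotProduct_inv_mulVec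
    hZ hZ' v

end Matrix

/-- `Matrix` carries no measurable structure; matrices are measured as `ι → ι → ℝ`. -/
theorem measurable_matrix_inv {ι : Type*} [Fintype ι] [DecidableEq ι] :
    Measurable fun M : ι → ι → ℝ => of.symm (of M)⁻¹ := by
  refine measurable_pi_lambda _ fun i => measurable_pi_lambda _ fun j => ?_
  simp only [of_symm_apply, inv_def, Ring.inverse_eq_inv', Matrix.smul_apply, smul_eq_mul]
  have hdet : Continuous fun M : ι → ι → ℝ => (of M).det := by fun_prop
  have hadj : Continuous fun M : ι → ι → ℝ => (of M).adjugate i j := by fun_prop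
  exact (measurable_inv.comp hdet.measurable).mul hadj.measurable

theorem measurable_initBlock_inv {m : ℕ} :
    Measurable fun A : Fin (m + 1) → Fin (m + 1) → ℝ => of.symm (of A).initBlock⁻¹ :=
  measurable_matrix_inv.comp (by fun_prop : Continuous fun (A : Fin (m + 1) → Fin (m + 1) → ℝ)
    (i j : Fin m) => A i.castSucc j.castSucc).measurable

theorem measurable_lastSchurVector {m : ℕ} :
    Measurable fun A : Fin (m + 1) → Fin (m + 1) → ℝ => (of A).lastSchurVector := by
  have hcont : Continuous fun p : (Fin (m + 1) → Fin (m + 1) → ℝ) × (Fin m → Fin m → ℝ) =>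
      (Fin.snoc (-(of p.2 *ᵥ fun i => p.1 i.castSucc (Fin.last m))) 1 : Fin (m + 1) → ℝ) := by
    fun_prop
  exact hcont.measurable.comp (measurable_id.prodMk measurable_initBlock_inv)

theorem measurable_lastSchurComplement {m : ℕ} :
    Measurable fun A : Fin (m + 1) → Fin (m + 1) → ℝ => (of A).lastSchurComplement := by
  have hcont : Continuous fun p : (Fin (m + 1) → Fin (m + 1) → ℝ) × (Fin m → Fin m → ℝ) =>
      p.1 (Fin.last m) (Fin.last m) - (fun i => p.1 i.castSucc (Fin.last m)) ⬝ᵥ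
        (of p.2 *ᵥ fun i => p.1 i.castSucc (Fin.last m)) := by
    fun_prop
  exact hcont.measurable.comp (measurable_id.prodMk measurable_initBlock_inv)

variable {Ω : Type*} [MeasurableSpace Ω] {P : Measure Ω}

theorem ProbabilityTheory.iIndepFun.indepFun_init_last {β : Type*} [MeasurableSpace β] {n : ℕ}
    {f : Fin (n + 1) → Ω → β} (h : iIndepFun f P) (hf : ∀ i, Measurable (f i)) :
    IndepFun (fun ω i => f (Fin.castSucc i) ω) (f (Fin.last n)) P := by
  have hST : Disjoint ({Fin.last n}ᶜ : Finset (Fin (n + 1))) {Fin.last n} := disjoint_compl_left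
  refine (h.indepFun_finset _ _ hST hf).comp
    (φ := fun g j => g ⟨Fin.castSucc j, by simp [Fin.castSucc_ne_last]⟩)
    (ψ := fun g => g ⟨Fin.last n, by simp⟩) ?_ ?_
  · exact measurable_pi_lambda _ fun _ => measurable_pi_apply _
  · exact measurable_pi_apply _

theorem ProbabilityTheory.IndepFun.lintegral_comp_prodMk [IsFiniteMeasure P] {β γ : Type*}
    [MeasurableSpace β] [MeasurableSpace γ] {Y : Ω → β} {x : Ω → γ} (h : IndepFun Y x P)
    (hY : Measurable Y) (hx : Measurable x) {G : β × γ → ℝ≥0∞} (hG : Measurable G) :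
    ∫⁻ ω, G (Y ω, x ω) ∂P = ∫⁻ y, ∫⁻ ω, G (y, x ω) ∂P ∂P.map Y := by
  rw [← lintegral_map hG (hY.prodMk hx),
    (indepFun_iff_map_prod_eq_prod_map_map hY.aemeasurable hx.aemeasurable).1 h,
    lintegral_prod _ hG.aemeasurable]
  exact lintegral_congr fun y => lintegral_map (hG.comp measurable_prodMk_left) hx

theorem lintegral_ofReal_dotProduct_sq_of_isotropic {k : ℕ} {x : Ω → Fin k → ℝ} (hx : Measurable x)
    (hsec : ∀ a b, ∫ ω, x ω a * x ω b ∂P = if a = b then 1 else 0) (c : Fin k → ℝ) :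
    ∫⁻ ω, ENNReal.ofReal ((c ⬝ᵥ x ω) ^ 2) ∂P = ENNReal.ofReal (c ⬝ᵥ c) := by
  have hL2 : ∀ a, MemLp (fun ω => x ω a) 2 P := fun a => by
    refine (memLp_two_iff_integrable_sq ((measurable_pi_apply a).comp hx).aestronglyMeasurable).2 ?_
    simp_rw [sq]
    -- a non-integrable function has integral `0`, so `∫ x_a² = 1` forces integrability
    by_contra hint
    exact absurd ((integral_undef hint).symm.trans (hsec a a)) (by simp)
  have hint : ∀ a b, Integrable (fun ω => x ω a * x ω b) P :=
    fun a b => (hL2 a).integrable_mul (hL2 b)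
  have hexp : ∀ ω, (c ⬝ᵥ x ω) ^ 2 = ∑ a, ∑ b, c a * c b * (x ω a * x ω b) := fun ω => by
    simp_rw [sq, dotProduct, Finset.sum_mul_sum, mul_mul_mul_comm]
  rw [← ofReal_integral_eq_lintegral_ofReal _ (ae_of_all _ fun ω => sq_nonneg _)]
  · simp_rw [hexp]
    rw [integral_finsetSum _ fun a _ => integrable_finsetSum _ fun b _ => (hint a b).const_mul _]
    simp_rw [integral_finsetSum _ fun b _ => (hint _ b).const_mul _, integral_const_mul, hsec]
    simp [dotProduct]
  · simp_rw [hexp]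
    exact integrable_finsetSum _ fun a _ => integrable_finsetSum _ fun b _ => (hint a b).const_mul _

theorem ofReal_inv_le_lintegral_ofReal_inv [IsProbabilityMeasure P] {s : Ω → ℝ} (hs : Measurable s)
    (hpos : ∀ᵐ ω ∂P, 0 < s ω) {a : ℝ} (ha : 0 < a)
    (hmean : ∫⁻ ω, ENNReal.ofReal (s ω) ∂P ≤ ENNReal.ofReal a) :
    ENNReal.ofReal a⁻¹ ≤ ∫⁻ ω, ENNReal.ofReal (s ω)⁻¹ ∂P := by
  have hamgm : ∀ᵐ ω ∂P, ENNReal.ofReal (2 * a⁻¹) ≤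
      ENNReal.ofReal (s ω)⁻¹ + ENNReal.ofReal (a⁻¹ ^ 2) * ENNReal.ofReal (s ω) := by
    filter_upwards [hpos] with ω hω
    rw [← ENNReal.ofReal_mul (by positivity), ← ENNReal.ofReal_add (by positivity) (by positivity)]
    refine ENNReal.ofReal_le_ofReal ?_
    calc 2 * a⁻¹ ≤ 2 * a⁻¹ + (s ω - a) ^ 2 / (s ω * a ^ 2) := by
          have : 0 ≤ (s ω - a) ^ 2 / (s ω * a ^ 2) := by positivity
          linarith
      _ = (s ω)⁻¹ + a⁻¹ ^ 2 * s ω := by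
          field_simp
          ring
  have hs' : Measurable fun ω => ENNReal.ofReal (s ω) := ENNReal.measurable_ofReal.comp hs
  refine ENNReal.le_of_add_le_add_right (a := ENNReal.ofReal a⁻¹) ENNReal.ofReal_ne_top ?_
  calc ENNReal.ofReal a⁻¹ + ENNReal.ofReal a⁻¹ = ∫⁻ _, ENNReal.ofReal (2 * a⁻¹) ∂P := by
        rw [← ENNReal.ofReal_add (by positivity) (by positivity), two_mul]; simp
    _ ≤ ∫⁻ ω, ENNReal.ofReal (s ω)⁻¹ + ENNReal.ofReal (a⁻¹ ^ 2) * ENNReal.ofReal (s ω) ∂P :=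
        lintegral_mono_ae hamgm
    _ = ∫⁻ ω, ENNReal.ofReal (s ω)⁻¹ ∂P +
          ENNReal.ofReal (a⁻¹ ^ 2) * ∫⁻ ω, ENNReal.ofReal (s ω) ∂P := by
        rw [lintegral_add_right' _ (hs'.const_mul _).aemeasurable, lintegral_const_mul _ hs']
    _ ≤ ∫⁻ ω, ENNReal.ofReal (s ω)⁻¹ ∂P + ENNReal.ofReal (a⁻¹ ^ 2) * ENNReal.ofReal a := by
        gcongr
    _ = ∫⁻ ω, ENNReal.ofReal (s ω)⁻¹ ∂P + ENNReal.ofReal a⁻¹ := by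
        rw [← ENNReal.ofReal_mul (by positivity)]
        congr 2
        field_simp

theorem ProbabilityTheory.IndepFun.lintegral_ofReal_dotProduct_sq_mul [IsFiniteMeasure P]
    {β : Type*} [MeasurableSpace β] {k : ℕ} {Y : Ω → β} {x : Ω → Fin k → ℝ} (h : IndepFun Y x P)
    (hY : Measurable Y) (hx : Measurable x)
    (hsec : ∀ a b, ∫ ω, x ω a * x ω b ∂P = if a = b then 1 else 0)
    {e : β → Fin k → ℝ} (he : Measurable e) {g : β → ℝ≥0∞} (hg : Measurable g) :
    ∫⁻ ω, ENNReal.ofReal ((e (Y ω) ⬝ᵥ x ω) ^ 2) * g (Y ω) ∂P =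
      ∫⁻ ω, ENNReal.ofReal (e (Y ω) ⬝ᵥ e (Y ω)) * g (Y ω) ∂P := by
  have hdot : Continuous fun q : (Fin k → ℝ) × (Fin k → ℝ) => (q.1 ⬝ᵥ q.2) ^ 2 := by fun_prop
  have hG : Measurable fun p : β × (Fin k → ℝ) => ENNReal.ofReal ((e p.1 ⬝ᵥ p.2) ^ 2) :=
    ENNReal.measurable_ofReal.comp
      (hdot.measurable.comp ((he.comp measurable_fst).prodMk measurable_snd))
  have hee : Measurable fun y => ENNReal.ofReal (e y ⬝ᵥ e y) * g y :=
    (ENNReal.measurable_ofReal.comp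
      ((by fun_prop : Continuous fun v : Fin k → ℝ => v ⬝ᵥ v).measurable.comp he)).mul hg
  rw [h.lintegral_comp_prodMk hY hx (G := fun p => ENNReal.ofReal ((e p.1 ⬝ᵥ p.2) ^ 2) * g p.1)
    (hG.mul (hg.comp measurable_fst)), ← lintegral_map hee hY]
  refine lintegral_congr fun y => ?_
  have hGy : Measurable fun ω => ENNReal.ofReal ((e y ⬝ᵥ x ω) ^ 2) :=
    ENNReal.measurable_ofReal.comp
      ((by fun_prop : Continuous fun v : Fin k → ℝ => (e y ⬝ᵥ v) ^ 2).measurable.comp hx)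
  dsimp only
  rw [lintegral_mul_const _ hGy, lintegral_ofReal_dotProduct_sq_of_isotropic hx hsec]

theorem lintegral_ofReal_lastSchurComplement_le {n m : ℕ} {Y : Ω → Fin n → Fin (m + 1) → ℝ}
    {x : Ω → Fin (m + 1) → ℝ} (hx : Measurable x)
    (hsec : ∀ a b, ∫ ω, x ω a * x ω b ∂P = if a = b then 1 else 0)
    (hrow : ∀ i, IdentDistrib (fun ω => Y ω i) x P P) :
    ∫⁻ ω, ENNReal.ofReal ((of (Y ω))ᵀ * of (Y ω)).lastSchurComplement ∂P ≤ n := by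
  have hsq : Measurable fun v : Fin (m + 1) → ℝ => ENNReal.ofReal (v (Fin.last m) ^ 2) := by
    fun_prop
  have hcol : ∀ i, ∫⁻ ω, ENNReal.ofReal (Y ω i (Fin.last m) ^ 2) ∂P = 1 := fun i => by
    refine ((hrow i).comp hsq).lintegral_eq.trans ?_
    simpa using lintegral_ofReal_dotProduct_sq_of_isotropic hx hsec (Pi.single (Fin.last m) 1)
  have hle : ∀ ω, ((of (Y ω))ᵀ * of (Y ω)).lastSchurComplement ≤
      ∑ i, Y ω i (Fin.last m) ^ 2 := fun ω => by
    simpa [mul_apply, sq] using (posSemidef_transpose_mul_self (of (Y ω))).lastSchurComplement_le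
  calc ∫⁻ ω, ENNReal.ofReal ((of (Y ω))ᵀ * of (Y ω)).lastSchurComplement ∂P
      ≤ ∫⁻ ω, ∑ i, ENNReal.ofReal (Y ω i (Fin.last m) ^ 2) ∂P := lintegral_mono fun ω => by
        rw [← ENNReal.ofReal_sum_of_nonneg fun i _ => sq_nonneg _]
        exact ENNReal.ofReal_le_ofReal (hle ω)
    _ = n := by
        rw [lintegral_finsetSum' (f := fun i ω => ENNReal.ofReal (Y ω i (Fin.last m) ^ 2)) _
          fun i _ => hsq.comp_aemeasurable (hrow i).aemeasurable_fst]
        simp [hcol]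

theorem ProbabilityTheory.IndepFun.lintegral_ofReal_inv_lastSchurComplement_le
    [IsFiniteMeasure P] {β : Type*} [MeasurableSpace β] {m : ℕ} {Y : Ω → β}
    {x : Ω → Fin (m + 1) → ℝ} (h : IndepFun Y x P) (hY : Measurable Y) (hx : Measurable x)
    (hsec : ∀ a b, ∫ ω, x ω a * x ω b ∂P = if a = b then 1 else 0)
    {A : β → Matrix (Fin (m + 1)) (Fin (m + 1)) ℝ} (hA : Measurable fun y => of.symm (A y)) :
    ∫⁻ ω, ENNReal.ofReal (A (Y ω)).lastSchurComplement⁻¹ ∂P ≤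
      ∫⁻ ω, ENNReal.ofReal ((A (Y ω)).lastSchurTerm (x ω)) ∂P := calc
  _ ≤ ∫⁻ ω, ENNReal.ofReal ((A (Y ω)).lastSchurVector ⬝ᵥ (A (Y ω)).lastSchurVector) *
        ENNReal.ofReal (A (Y ω)).lastSchurComplement⁻¹ ∂P :=
      lintegral_mono fun ω => le_mul_of_one_le_left' <|
        ENNReal.one_le_ofReal.2 (one_le_lastSchurVector_dotProduct _)
  _ = ∫⁻ ω, ENNReal.ofReal (((A (Y ω)).lastSchurVector ⬝ᵥ x ω) ^ 2) *
        ENNReal.ofReal (A (Y ω)).lastSchurComplement⁻¹ ∂P :=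
      (h.lintegral_ofReal_dotProduct_sq_mul hY hx hsec (measurable_lastSchurVector.comp hA)
        (ENNReal.measurable_ofReal.comp (measurable_lastSchurComplement.comp hA).inv)).symm
  _ = _ := by simp_rw [lastSchurTerm, div_eq_mul_inv, ENNReal.ofReal_mul (sq_nonneg _)]

theorem one_le_lintegral_lastSchurTerm [IsProbabilityMeasure P] {n m : ℕ} (hn : 0 < n)
    {Y : Ω → Fin n → Fin (m + 1) → ℝ} {x : Ω → Fin (m + 1) → ℝ} (h : IndepFun Y x P)
    (hY : Measurable Y) (hx : Measurable x)
    (hsec : ∀ a b, ∫ ω, x ω a * x ω b ∂P = if a = b then 1 else 0)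
    (hrow : ∀ i, IdentDistrib (fun ω => Y ω i) x P P)
    (hpos : ∀ᵐ ω ∂P, 0 < ((of (Y ω))ᵀ * of (Y ω)).lastSchurComplement) :
    1 ≤ ∫⁻ ω, ENNReal.ofReal (n * ((of (Y ω))ᵀ * of (Y ω)).lastSchurTerm (x ω)) ∂P := by
  have hgram : Continuous fun y : Fin n → Fin (m + 1) → ℝ => of.symm ((of y)ᵀ * of y) :=
    (by fun_prop : Continuous fun y : Fin n → Fin (m + 1) → ℝ => (of y)ᵀ * of y)
  have hmean := lintegral_ofReal_lastSchurComplement_le hx hsec hrow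
  rw [← ENNReal.ofReal_natCast] at hmean
  have hn' : (0 : ℝ) < n := Nat.cast_pos.2 hn
  calc 1 = ENNReal.ofReal n * ENNReal.ofReal (n : ℝ)⁻¹ := by
        rw [← ENNReal.ofReal_mul hn'.le, mul_inv_cancel₀ hn'.ne', ENNReal.ofReal_one]
    _ ≤ ENNReal.ofReal n *
          ∫⁻ ω, ENNReal.ofReal ((of (Y ω))ᵀ * of (Y ω)).lastSchurComplement⁻¹ ∂P :=
        mul_le_mul_right (ofReal_inv_le_lintegral_ofReal_inv
          ((measurable_lastSchurComplement.comp hgram.measurable).comp hY) hpos hn' hmean) _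
    _ ≤ ENNReal.ofReal n *
          ∫⁻ ω, ENNReal.ofReal (((of (Y ω))ᵀ * of (Y ω)).lastSchurTerm (x ω)) ∂P :=
        mul_le_mul_right
          (h.lintegral_ofReal_inv_lastSchurComplement_le hY hx hsec hgram.measurable) _
    _ = _ := by
        rw [← lintegral_const_mul' _ _ ENNReal.ofReal_ne_top]
        simp_rw [ENNReal.ofReal_mul hn'.le]

end

theorem expected_kappa_submodel_general {n m : ℕ} (hn : 0 < n)
    {Ω : Type*} [MeasureSpace Ω] (P : Measure Ω) [IsProbabilityMeasure P]
    (r : Fin (n + 1) → Ω → (Fin (m + 1) → ℝ))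
    (hmeas : ∀ i, Measurable (r i))
    (hiid : iIndepFun r P)
    (hident : ∀ i, P.map (r i) = P.map (r (Fin.last n)))
    (X : Ω → Matrix (Fin n) (Fin (m + 1)) ℝ)
    (hXdef : ∀ ω, X ω = Matrix.of fun i j => r i.castSucc ω j)
    (x : Ω → Fin (m + 1) → ℝ) (hxdef : ∀ ω, x ω = r (Fin.last n) ω)
    (X' : Ω → Matrix (Fin n) (Fin m) ℝ)
    (hX'def : ∀ ω, X' ω = (X ω).submatrix id Fin.castSucc)
    (x' : Ω → Fin m → ℝ) (hx'def : ∀ ω, x' ω = fun j => x ω j.castSucc)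
    (hsec : ∀ a b : Fin (m + 1),
      ∫ ω, x ω a * x ω b ∂P = if a = b then (1 : ℝ) else 0)
    (hinv : ∀ᵐ ω ∂P, IsUnit ((X ω)ᵀ * X ω).det)
    (hinv' : ∀ᵐ ω ∂P, IsUnit ((X' ω)ᵀ * X' ω).det)
    (hκint : Integrable (fun ω => (n : ℝ) * (x ω ⬝ᵥ (((X ω)ᵀ * X ω)⁻¹ *ᵥ x ω))) P)
    (hκ'int : Integrable (fun ω => (n : ℝ) * (x' ω ⬝ᵥ (((X' ω)ᵀ * X' ω)⁻¹ *ᵥ x' ω))) P) :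
    (∫ ω, (n : ℝ) * (x' ω ⬝ᵥ (((X' ω)ᵀ * X' ω)⁻¹ *ᵥ x' ω)) ∂P) + 1
      ≤ ∫ ω, (n : ℝ) * (x ω ⬝ᵥ (((X ω)ᵀ * X ω)⁻¹ *ᵥ x ω)) ∂P := by
  have hxr : x = r (Fin.last n) := funext hxdef
  have hx : Measurable x := hxr ▸ hmeas _
  have hpos : ∀ᵐ ω ∂P, 0 < ((X ω)ᵀ * X ω).lastSchurComplement := by
    filter_upwards [hinv, hinv'] with ω h h'
    rw [hX'def ω, ← initBlock_transpose_mul_self] at h'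
    exact (posSemidef_transpose_mul_self _).lastSchurComplement_pos h h'
  have hgap : ∀ᵐ ω ∂P, (n : ℝ) * (x ω ⬝ᵥ (((X ω)ᵀ * X ω)⁻¹ *ᵥ x ω)) =
      (n : ℝ) * (x' ω ⬝ᵥ (((X' ω)ᵀ * X' ω)⁻¹ *ᵥ x' ω)) +
        n * ((X ω)ᵀ * X ω).lastSchurTerm (x ω) := by
    filter_upwards [hinv, hinv'] with ω h h'
    rw [hX'def ω] at h' ⊢
    rw [hx'def ω, dotProduct_inv_transpose_mul_self h h', mul_add]
    rfl
  have hterm := one_le_lintegral_lastSchurTerm hn (hxr ▸ hiid.indepFun_init_last hmeas)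
    (measurable_pi_lambda _ fun i => hmeas _) hx hsec
    (fun i => ⟨(hmeas _).aemeasurable, hx.aemeasurable, hxr ▸ hident _⟩)
    (by simpa only [hXdef] using hpos)
  simp only [← hXdef] at hterm
  have hgapint : Integrable (fun ω => (n : ℝ) * ((X ω)ᵀ * X ω).lastSchurTerm (x ω)) P :=
    (hκint.sub hκ'int).congr <| hgap.mono fun ω h => by
      simp only [Pi.sub_apply, h, add_sub_cancel_left]
  have hgapnn : ∀ᵐ ω ∂P, 0 ≤ (n : ℝ) * ((X ω)ᵀ * X ω).lastSchurTerm (x ω) :=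
    hpos.mono fun ω h => mul_nonneg n.cast_nonneg (div_nonneg (sq_nonneg _) h.le)
  rw [← ofReal_integral_eq_lintegral_ofReal hgapint hgapnn, ENNReal.one_le_ofReal] at hterm
  rw [integral_congr_ae hgap, integral_add hκ'int hgapint]
  linarith

/-- Proposition 1: if the `n` rows of the design matrix `X` and the test input `x` are
iid random vectors in `ℝ^{m+1}` (`m ≥ 1`, so at least two entries) with `E[x xᵀ] = I`,
and `XᵀX` (resp. `X'ᵀX'` for the submodel obtained by deleting the last coordinate) is
almost surely invertible, then `E[κ_x] ≥ E[κ_{x'}] + 1`, where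
`κ_x = n·xᵀ(XᵀX)⁻¹x`. -/
theorem expected_kappa_submodel {n m : ℕ} (hm : 1 ≤ m) (hn : 0 < n)
    {Ω : Type*} [MeasureSpace Ω] (P : Measure Ω) [IsProbabilityMeasure P]
    (r : Fin (n + 1) → Ω → (Fin (m + 1) → ℝ))
    (hmeas : ∀ i, Measurable (r i))
    (hiid : iIndepFun r P)
    (hident : ∀ i, P.map (r i) = P.map (r (Fin.last n)))
    (X : Ω → Matrix (Fin n) (Fin (m + 1)) ℝ)
    (hXdef : ∀ ω, X ω = Matrix.of fun i j => r i.castSucc ω j)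
    (x : Ω → Fin (m + 1) → ℝ) (hxdef : ∀ ω, x ω = r (Fin.last n) ω)
    (X' : Ω → Matrix (Fin n) (Fin m) ℝ)
    (hX'def : ∀ ω, X' ω = (X ω).submatrix id Fin.castSucc)
    (x' : Ω → Fin m → ℝ) (hx'def : ∀ ω, x' ω = fun j => x ω j.castSucc)
    (hsec : ∀ a b : Fin (m + 1),
      ∫ ω, x ω a * x ω b ∂P = if a = b then (1 : ℝ) else 0)
    (hinv : ∀ᵐ ω ∂P, IsUnit ((X ω)ᵀ * X ω).det)
    (hinv' : ∀ᵐ ω ∂P, IsUnit ((X' ω)ᵀ * X' ω).det)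
    (hκint : Integrable (fun ω => (n : ℝ) * (x ω ⬝ᵥ (((X ω)ᵀ * X ω)⁻¹ *ᵥ x ω))) P)
    (hκ'int : Integrable (fun ω => (n : ℝ) * (x' ω ⬝ᵥ (((X' ω)ᵀ * X' ω)⁻¹ *ᵥ x' ω))) P) :
    (∫ ω, (n : ℝ) * (x' ω ⬝ᵥ (((X' ω)ᵀ * X' ω)⁻¹ *ᵥ x' ω)) ∂P) + 1
      ≤ ∫ ω, (n : ℝ) * (x ω ⬝ᵥ (((X ω)ᵀ * X ω)⁻¹ *ᵥ x ω)) ∂P :=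
  expected_kappa_submodel_general hn P r hmeas hiid hident X hXdef x hxdef X' hX'def x' hx'def hsec
    hinv hinv' hκint hκ'int
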